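/- If G is a finite nilpotent group with a cyclic or generalized quaternion Sylow p-subgroup for some prime p, then the cyclic graph Δ(G) has a dominating vertex. -/

import Mathlib

/-- The cyclic graph of a group: vertices are the nonidentity elements,
two distinct vertices are adjacent iff they generate a cyclic subgroup. -/
def cyclicGraph (G : Type*) [Group G] : SimpleGraph {g : G // g ≠ 1} where
  Adj x y := x ≠ y ∧ IsCyclic (Subgroup.closure ({x.1, y.1} : Set G))
  symm := by
    refine ⟨?_⟩
    rintro x y ⟨hne, hc⟩
    exact ⟨hne.symm, by rwa [Set.pair_comm]⟩
  loopless := by refine ⟨?_⟩; rintro x ⟨hne, -⟩; exact hne rfl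

/-- A group is a Frobenius group if it has a nontrivial proper subgroup `H`
with `H ∩ H^g = 1` for every `g ∉ H`. -/
def IsFrobenius (G : Type*) [Group G] : Prop :=
  ∃ H : Subgroup G, H ≠ ⊥ ∧ H ≠ ⊤ ∧
    ∀ g : G, g ∉ H → ∀ x : G, x ∈ H → g * x * g⁻¹ ∈ H → x = 1

/-- A group is generalized quaternion if it is isomorphic to `QuaternionGroup (2 ^ m)`
for some `m ≥ 1` (i.e. a generalized quaternion group of order `2 ^ (m + 2)`). -/
def IsGeneralizedQuaternion (P : Type*) [Group P] : Prop :=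
  ∃ m : ℕ, 1 ≤ m ∧ Nonempty (P ≃* QuaternionGroup (2 ^ m))

/-!
Since `P` is cyclic or generalized quaternion, it has a unique subgroup `⟨z⟩` of order `p`, and
as `G` is nilpotent, `P` is its only Sylow `p`-subgroup, so every element of order `p` of `G`
lies in `⟨z⟩`. Hence `z ∈ ⟨g⟩` whenever `p ∣ orderOf g`. In particular `z` commutes with every
`p`-element, and with every `q`-element for `q ≠ p` because distinct Sylow subgroups of a nilpotent
group are normal and intersect trivially; elements of prime power order generate `G`, so `z` is
central. If `p ∤ orderOf g`, then `z` and `g` commute and have coprime orders, so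
`⟨z, g⟩ = ⟨z * g⟩`.
-/

open Subgroup

theorem IsCyclic.mem_zpowers_of_orderOf_eq {α : Type*} [Group α] [Finite α] [IsCyclic α]
    {x y : α} (h : orderOf x = orderOf y) : x ∈ zpowers y := by
  classical
  have := Fintype.ofFinite α
  -- a cyclic group has at most `n` solutions of `a ^ n = 1`, and `⟨y⟩` already provides `n`
  have hsub : (zpowers y : Set α).toFinset ⊆ Finset.univ.filter (· ^ orderOf y = 1) := by
    intro a ha
    simpa using orderOf_dvd_iff_pow_eq_one.mp (orderOf_dvd_of_mem_zpowers (Set.mem_toFinset.mp ha))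
  have heq := Finset.eq_of_subset_of_card_le hsub <| by
    rw [Set.toFinset_card, ← Nat.card_eq_fintype_card, SetLike.coe_sort_coe, Nat.card_zpowers]
    exact IsCyclic.card_pow_eq_one_le (orderOf_pos y)
  have hx : x ∈ Finset.univ.filter (· ^ orderOf y = 1) := by simp [← h, pow_orderOf_eq_one]
  rw [← heq] at hx
  simpa using hx

theorem QuaternionGroup.eq_a_of_orderOf_eq_two {n : ℕ} [NeZero n] {u : QuaternionGroup n}
    (hu : orderOf u = 2) : u = a n := by
  cases u with
  | xa i => rw [orderOf_xa] at hu; omega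
  | a i =>
    have hsq : a (i + i) = (1 : QuaternionGroup n) := by
      rw [← a_mul_a, ← sq, ← hu, pow_orderOf_eq_one]
    have hi : i ≠ 0 := by rintro rfl; simp at hu
    rw [one_def, a.injEq] at hsq
    have hval := congrArg ZMod.val hsq
    rw [ZMod.val_add, ZMod.val_zero] at hval
    have hlt := ZMod.val_lt i
    have hpos := (ZMod.val_pos (n := 2 * n)).mpr hi
    obtain ⟨c, hc⟩ := Nat.dvd_of_mod_eq_zero hval
    have hc1 : c = 1 := by
      rcases c with _ | _ | c
      · omega
      · rfl
      · nlinarith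
    subst hc1
    rw [← ZMod.natCast_zmod_val i]
    congr 2
    omega

theorem IsGeneralizedQuaternion.eq_two_of_prime_dvd_card {Q : Type*} [Group Q] [Finite Q]
    (hQ : IsGeneralizedQuaternion Q) {p : ℕ} (hp : p.Prime) (hdvd : p ∣ Nat.card Q) : p = 2 := by
  obtain ⟨m, -, ⟨e⟩⟩ := hQ
  rw [Nat.card_congr e.toEquiv, Nat.card_eq_fintype_card, QuaternionGroup.card,
    show 4 * 2 ^ m = 2 ^ (m + 2) by ring] at hdvd
  exact (Nat.prime_dvd_prime_iff_eq hp Nat.prime_two).mp (hp.dvd_of_dvd_pow hdvd)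

theorem IsGeneralizedQuaternion.eq_of_orderOf_eq_two {Q : Type*} [Group Q]
    (hQ : IsGeneralizedQuaternion Q) {x y : Q} (hx : orderOf x = 2) (hy : orderOf y = 2) :
    x = y := by
  obtain ⟨m, -, ⟨e⟩⟩ := hQ
  rw [← e.orderOf_eq] at hx hy
  exact e.injective <| (QuaternionGroup.eq_a_of_orderOf_eq_two hx).trans
    (QuaternionGroup.eq_a_of_orderOf_eq_two hy).symm

theorem exists_orderOf_eq_prime_forall_mem_zpowers {Q : Type*} [Group Q] [Finite Q]
    (hQ : IsCyclic Q ∨ IsGeneralizedQuaternion Q) {p : ℕ} [hp : Fact p.Prime]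
    (hdvd : p ∣ Nat.card Q) :
    ∃ z : Q, orderOf z = p ∧ ∀ y : Q, orderOf y = p → y ∈ zpowers z := by
  obtain ⟨z, hz⟩ := exists_prime_orderOf_dvd_card' p hdvd
  refine ⟨z, hz, fun y hy => ?_⟩
  rcases hQ with hcyc | hquat
  · exact IsCyclic.mem_zpowers_of_orderOf_eq (hy.trans hz.symm)
  · have hp2 := hquat.eq_two_of_prime_dvd_card hp.out hdvd
    rw [hquat.eq_of_orderOf_eq_two (hy.trans hp2) (hz.trans hp2)]
    exact mem_zpowers z

theorem IsPGroup.le_of_normal_sylow {G : Type*} [Group G] [Finite G] {p : ℕ} [Fact p.Prime]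
    {H : Subgroup G} (hH : IsPGroup p H) (P : Sylow p G) [(P : Subgroup G).Normal] :
    H ≤ P := by
  obtain ⟨Q, hQ⟩ := hH.exists_le_sylow
  have := Sylow.unique_of_normal P ‹_›
  exact Subsingleton.elim Q P ▸ hQ

theorem Sylow.exists_orderOf_eq_prime_forall_mem_zpowers_of_normal {G : Type*} [Group G]
    [Finite G] {p : ℕ} [Fact p.Prime] (P : Sylow p G) [(P : Subgroup G).Normal] [Nontrivial P]
    (hP : IsCyclic P ∨ IsGeneralizedQuaternion P) :
    ∃ z : G, orderOf z = p ∧ ∀ y : G, orderOf y = p → y ∈ zpowers z := by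
  have hdvd : p ∣ Nat.card P := P.isPGroup'.card_eq_or_dvd.resolve_left Finite.one_lt_card.ne'
  obtain ⟨z, hz, hzP⟩ := exists_orderOf_eq_prime_forall_mem_zpowers hP hdvd
  refine ⟨z, by rwa [orderOf_coe], fun y hy => ?_⟩
  have hyP : y ∈ P := IsPGroup.le_of_normal_sylow
    (.of_card (n := 1) (by rw [Nat.card_zpowers, hy, pow_one])) P (mem_zpowers y)
  have := mem_map_of_mem (P : Subgroup G).subtype (hzP ⟨y, hyP⟩ (by rwa [orderOf_mk]))
  rwa [MonoidHom.map_zpowers] at this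

theorem mem_zpowers_of_dvd_orderOf {G : Type*} [Group G] [Finite G] {p : ℕ} {z : G}
    (hz : orderOf z = p) (hzp : ∀ y : G, orderOf y = p → y ∈ zpowers z) {g : G}
    (hg : p ∣ orderOf g) : z ∈ zpowers g := by
  set y := g ^ (orderOf g / p)
  have hy : orderOf y = p := orderOf_pow_orderOf_div (orderOf_pos g).ne' hg
  have hyz : zpowers y = zpowers z := eq_of_le_of_card_ge (zpowers_le.mpr (hzp y hy)) <| by
    rw [Nat.card_zpowers, Nat.card_zpowers, hy, hz]
  exact zpowers_le.mpr (npow_mem_zpowers g _) (hyz ▸ mem_zpowers z)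

theorem mem_of_forall_orderOf_eq_prime_pow {G : Type*} [Group G] [Finite G] (H : Subgroup G)
    (hH : ∀ (g : G) (q k : ℕ), q.Prime → orderOf g = q ^ k → g ∈ H) (g : G) : g ∈ H := by
  induction h : orderOf g using Nat.recOnPrimeCoprime generalizing g with
  | zero => exact absurd h (orderOf_pos g).ne'
  | prime_pow q k hq => exact hH g q k hq h
  | coprime a b ha hb hab iha ihb =>
    have hgb : g ^ b ∈ H := iha _ <| by
      rw [orderOf_pow_of_dvd (by omega) (h ▸ dvd_mul_left b a), h,
        Nat.mul_div_cancel _ (by omega)]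
    have hga : g ^ a ∈ H := ihb _ <| by
      rw [orderOf_pow_of_dvd (by omega) (h ▸ dvd_mul_right a b), h,
        Nat.mul_div_cancel_left _ (by omega)]
    obtain ⟨s, t, hst⟩ := Nat.isCoprime_iff_coprime.mpr hab
    have hg : g = (g ^ a) ^ s * (g ^ b) ^ t := by
      rw [← zpow_natCast, ← zpow_natCast, ← zpow_mul, ← zpow_mul, ← zpow_add, mul_comm (a : ℤ),
        mul_comm (b : ℤ), hst, zpow_one]
    rw [hg]
    exact mul_mem (zpow_mem hga s) (zpow_mem hgb t)

theorem Group.IsNilpotent.commute_of_isPGroup {G : Type*} [Group G] [Finite G]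
    [Group.IsNilpotent G] {p q : ℕ} [Fact p.Prime] [Fact q.Prime] (hpq : p ≠ q) {x y : G}
    (hx : IsPGroup p (zpowers x)) (hy : IsPGroup q (zpowers y)) : Commute x y := by
  obtain ⟨P, hP⟩ := hx.exists_le_sylow
  obtain ⟨Q, hQ⟩ := hy.exists_le_sylow
  have hnc := Group.normalizerCondition_of_isNilpotent (G := G)
  exact commute_of_normal_of_disjoint _ _ (P.normal_of_normalizerCondition hnc)
    (Q.normal_of_normalizerCondition hnc)
    (IsPGroup.disjoint_of_ne p q hpq _ _ P.isPGroup' Q.isPGroup')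
    x y (hP (mem_zpowers x)) (hQ (mem_zpowers y))

theorem mem_center_of_forall_dvd_orderOf_mem_zpowers {G : Type*} [Group G] [Finite G]
    [Group.IsNilpotent G] {p : ℕ} [Fact p.Prime] {z : G} (hz : orderOf z = p)
    (hzg : ∀ g : G, p ∣ orderOf g → z ∈ zpowers g) : z ∈ center G := by
  refine mem_center_iff.mpr fun g => mem_centralizer_singleton_iff.mp ?_
  refine mem_of_forall_orderOf_eq_prime_pow _ (fun g q k hq hg => ?_) g
  have := Fact.mk hq
  rcases k.eq_zero_or_pos with rfl | hk
  · rw [pow_zero, orderOf_eq_one_iff] at hg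
    exact hg ▸ one_mem _
  rcases eq_or_ne q p with rfl | hqp
  · obtain ⟨j, rfl⟩ := mem_zpowers_iff.mp (hzg g (hg ▸ dvd_pow_self q hk.ne'))
    exact mem_centralizer_singleton_iff.mpr (Commute.self_zpow g j).eq
  · refine mem_centralizer_singleton_iff.mpr (Group.IsNilpotent.commute_of_isPGroup hqp ?_ ?_).eq
    · exact .of_card (by rw [Nat.card_zpowers, hg])
    · exact .of_card (n := 1) (by rw [Nat.card_zpowers, hz, pow_one])

theorem Commute.mem_zpowers_mul_of_coprime {G : Type*} [Group G] {x y : G} (h : Commute x y)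
    (hco : (orderOf x).Coprime (orderOf y)) : x ∈ zpowers (x * y) := by
  have hx : x ∈ zpowers (x ^ orderOf y) := mem_zpowers_pow_iff.mpr hco.symm
  rw [← mul_one (x ^ orderOf y), ← pow_orderOf_eq_one y, ← h.mul_pow] at hx
  exact zpowers_le.mpr (npow_mem_zpowers _ _) hx

theorem isCyclic_closure_pair_of_mem_zpowers {G : Type*} [Group G] {a b w : G}
    (ha : a ∈ zpowers w) (hb : b ∈ zpowers w) : IsCyclic (closure ({a, b} : Set G)) :=
  isCyclic_of_le <| closure_le _ |>.mpr <| Set.insert_subset ha (Set.singleton_subset_iff.mpr hb)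

theorem stmt_15 {G : Type*} [Group G] [Finite G] (hnil : Group.IsNilpotent G)
    (p : ℕ) (hp : p.Prime) (P : Sylow p G)
    (hP : IsCyclic P ∨ IsGeneralizedQuaternion P) [Nontrivial P] :
    ∃ z : G, z ≠ 1 ∧ ∀ g : G, g ≠ 1 → g ≠ z →
      IsCyclic (Subgroup.closure ({z, g} : Set G)) := by
  have := Fact.mk hp
  have : (P : Subgroup G).Normal :=
    P.normal_of_normalizerCondition Group.normalizerCondition_of_isNilpotent
  obtain ⟨z, hz, hzp⟩ := P.exists_orderOf_eq_prime_forall_mem_zpowers_of_normal hP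
  have hzg : ∀ g : G, p ∣ orderOf g → z ∈ zpowers g := fun g => mem_zpowers_of_dvd_orderOf hz hzp
  refine ⟨z, fun h => hp.ne_one (by rw [← hz, h, orderOf_one]), fun g _ _ => ?_⟩
  by_cases hpg : p ∣ orderOf g
  · exact isCyclic_closure_pair_of_mem_zpowers (hzg g hpg) (mem_zpowers g)
  · have hcomm : Commute z g :=
      (mem_center_iff.mp (mem_center_of_forall_dvd_orderOf_mem_zpowers hz hzg) g).symm
    have hco : (orderOf z).Coprime (orderOf g) := hz ▸ hp.coprime_iff_not_dvd.mpr hpg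
    exact isCyclic_closure_pair_of_mem_zpowers (hcomm.mem_zpowers_mul_of_coprime hco)
      (hcomm.eq ▸ hcomm.symm.mem_zpowers_mul_of_coprime hco.symm)
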